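/- arXiv:1409.2424 — 7 statements merged into one kernel-verified Lean document; each statement's English description precedes it below -/
import Mathlib

section
/- Let V be a finite-dimensional complex vector space with a nondegenerate symmetric bilinear form, and let A be a finite spanning set of nonzero vectors in V such that A is irreducible (i.e., A cannot be partitioned into two nonempty subsets spanning orthogonal complementary subspaces). If the operator S = Σ_{β∈A} β⊗β commutes with α⊗α for every α ∈ A, then S is a scalar multiple of the identity. -/
/-!
Each `α ∈ A` is an eigenvector of `S`: applying `S ∘ (α⊗α) = (α⊗α) ∘ S` to a vector `x` with
`B α x ≠ 0` shows that `S α` is a multiple of `α`. Since `B` is symmetric, `S` is self-adjoint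
for `B`, so eigenvectors for distinct eigenvalues are orthogonal. Splitting `A` according to
whether the eigenvalue equals that of a fixed `α₀ ∈ A` therefore gives an orthogonal partition,
which irreducibility forces to be trivial; as `A` spans `V`, `S` is scalar.
-/

namespace LinearMap

theorem exists_smul_eq_of_commute_smulRight {K M : Type*} [Field K] [AddCommGroup M]
    [Module K M] {φ : M →ₗ[K] K} (hφ : φ ≠ 0) (v : M) {f : Module.End K M}
    (h : Commute (φ.smulRight v) f) : ∃ c : K, f v = c • v := by
  obtain ⟨x, hx⟩ : ∃ x, φ x ≠ 0 := by
    by_contra! hφx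
    exact hφ (LinearMap.ext hφx)
  have hfx : φ (f x) • v = φ x • f v := by
    simpa [Module.End.mul_apply] using LinearMap.congr_fun h.eq x
  refine ⟨(φ x)⁻¹ * φ (f x), ?_⟩
  rw [mul_smul, hfx, inv_smul_smul₀ hx]

variable {R M : Type*} [CommRing R] [AddCommGroup M] [Module R M] {B : M →ₗ[R] M →ₗ[R] R}

theorem isSelfAdjoint_smulRight_self (hB : B.IsSymm) (v : M) :
    B.IsSelfAdjoint ((B v).smulRight v) := fun x y => by
  simp only [smulRight_apply, map_smul, smul_apply, smul_eq_mul, ← hB.eq v x, RingHom.id_apply]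
  ring

theorem isSelfAdjoint_sum_smulRight_self (hB : B.IsSymm) (A : Finset M) :
    B.IsSelfAdjoint ⇑(∑ β ∈ A, (B β).smulRight β : Module.End R M) :=
  Submodule.sum_mem (selfAdjointSubmodule B) fun β _ => isSelfAdjoint_smulRight_self hB β

theorem IsSelfAdjoint.apply_eq_zero_of_eigenvalue_ne [NoZeroDivisors R] {f : Module.End R M}
    (hf : B.IsSelfAdjoint f) {x y : M} {a b : R} (hx : f x = a • x) (hy : f y = b • y)
    (hab : a ≠ b) : B x y = 0 := by
  have h : a * B x y = b * B x y := by
    simpa [hx, hy] using hf x y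
  exact (mul_eq_zero.mp (by rw [sub_mul, h, sub_self])).resolve_left (sub_ne_zero.mpr hab)

end LinearMap

namespace Finset

def IsIndecomposable {α : Type*} [DecidableEq α] (r : α → α → Prop) (A : Finset α) : Prop :=
  ∀ A₁ A₂ : Finset α, A₁ ∪ A₂ = A → A₁.Nonempty → A₂.Nonempty → Disjoint A₁ A₂ →
    ¬ ∀ a ∈ A₁, ∀ b ∈ A₂, r a b

theorem IsIndecomposable.forall_mem {α : Type*} [DecidableEq α] {r : α → α → Prop}
    {A : Finset α} (hA : A.IsIndecomposable r) {p : α → Prop}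
    (hp : ∀ a ∈ A, p a → ∀ b ∈ A, ¬ p b → r a b) {a₀ : α} (ha₀ : a₀ ∈ A) (hpa₀ : p a₀) :
    ∀ a ∈ A, p a := by
  classical
  by_contra! ⟨b₀, hb₀, hpb₀⟩
  refine hA (A.filter p) (A.filter (¬ p ·)) (filter_union_filter_not_eq p A)
    ⟨a₀, mem_filter.mpr ⟨ha₀, hpa₀⟩⟩ ⟨b₀, mem_filter.mpr ⟨hb₀, hpb₀⟩⟩
    (disjoint_filter_filter_not A A p) fun a ha b hb => ?_
  rw [mem_filter] at ha hb
  exact hp a ha.1 ha.2 b hb.1 hb.2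

end Finset

theorem stmt_1_general (V : Type*) [AddCommGroup V] [Module ℂ V] [DecidableEq V]
    (B : V →ₗ[ℂ] V →ₗ[ℂ] ℂ) (hB : ∀ x y, B x y = B y x)
    (hnd : ∀ x, (∀ y, B x y = 0) → x = 0)
    (A : Finset V) (h0 : (0 : V) ∉ A)
    (hspan : Submodule.span ℂ (A : Set V) = ⊤)
    (hirr : ∀ A₁ A₂ : Finset V, A₁ ∪ A₂ = A → A₁.Nonempty → A₂.Nonempty →
      Disjoint A₁ A₂ → ¬ (∀ α ∈ A₁, ∀ β ∈ A₂, B α β = 0))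
    (hcomm : ∀ α ∈ A, Commute ((B α).smulRight α) (∑ β ∈ A, (B β).smulRight β)) :
    ∃ c : ℂ, (∑ β ∈ A, (B β).smulRight β) = c • (LinearMap.id : V →ₗ[ℂ] V) := by
  rcases A.eq_empty_or_nonempty with rfl | ⟨α₀, hα₀⟩
  · exact ⟨0, by simp⟩
  set S : V →ₗ[ℂ] V := ∑ β ∈ A, (B β).smulRight β
  have hS : B.IsSelfAdjoint S := LinearMap.isSelfAdjoint_sum_smulRight_self ⟨hB⟩ A
  have heigen : ∀ α ∈ A, ∃ c : ℂ, S α = c • α := fun α hα =>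
    LinearMap.exists_smul_eq_of_commute_smulRight
      (fun hBα => h0 (hnd α (LinearMap.congr_fun hBα) ▸ hα)) α (hcomm α hα)
  obtain ⟨c₀, hc₀⟩ := heigen α₀ hα₀
  have hall : ∀ α ∈ A, S α = c₀ • α :=
    Finset.IsIndecomposable.forall_mem hirr (fun α _ hα β hβA hβ => by
      obtain ⟨c, hc⟩ := heigen β hβA
      exact hS.apply_eq_zero_of_eigenvalue_ne hα hc (by rintro rfl; exact hβ hc)) hα₀ hc₀
  exact ⟨c₀, LinearMap.ext_on hspan fun α hα => by simpa using hall α hα⟩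

/-- If the sum `S = Σ_{β∈A} β⊗β` commutes with every `α⊗α`, `α ∈ A`, for an irreducible
finite spanning set `A` of nonzero vectors in a complex vector space with nondegenerate
symmetric bilinear form, then `S` is a scalar multiple of the identity. -/
theorem stmt_1 (V : Type*) [AddCommGroup V] [Module ℂ V] [FiniteDimensional ℂ V] [DecidableEq V]
    (B : V →ₗ[ℂ] V →ₗ[ℂ] ℂ) (hB : ∀ x y, B x y = B y x)
    (hnd : ∀ x, (∀ y, B x y = 0) → x = 0)
    (A : Finset V) (h0 : (0 : V) ∉ A)
    (hspan : Submodule.span ℂ (A : Set V) = ⊤)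
    (hirr : ∀ A₁ A₂ : Finset V, A₁ ∪ A₂ = A → A₁.Nonempty → A₂.Nonempty →
      Disjoint A₁ A₂ → ¬ (∀ α ∈ A₁, ∀ β ∈ A₂, B α β = 0))
    (hcomm : ∀ α ∈ A, Commute ((B α).smulRight α) (∑ β ∈ A, (B β).smulRight β)) :
    ∃ c : ℂ, (∑ β ∈ A, (B β).smulRight β) = c • (LinearMap.id : V →ₗ[ℂ] V) :=
  stmt_1_general V B hB hnd A h0 hspan hirr hcomm
end

section
/- Let A ⊂ ℂⁿ be a finite set of nonzero vectors with Σ_{α∈A} α_i α_j = δ_{ij}, and let ψ be a polynomial solution of ∂_i ψ_j = κ Σ_{α∈A} α_i α_j ⟨α,ψ⟩/⟨α,z⟩ on the arrangement complement. Then Σᵢ zᵢ ∂_i ⟨β,ψ⟩ = κ⟨β,ψ⟩ for every β ∈ ℂⁿ; in particular every nonzero component of ψ is a homogeneous polynomial of degree κ. -/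
open MvPolynomial in
/-- A polynomial solution `ψ` of the ∨-parallel system satisfies the Euler identity
`Σᵢ zᵢ ∂ᵢ ⟨β,ψ⟩ = κ ⟨β,ψ⟩` for every covector `β`. -/
theorem stmt_3 (n : ℕ) (A : Finset (Fin n → ℂ)) (h0 : (0 : Fin n → ℂ) ∉ A)
    (horth : ∀ i j, ∑ α ∈ A, α i * α j = if i = j then 1 else 0)
    (κ : ℂ) (ψ : Fin n → MvPolynomial (Fin n) ℂ)
    (heq : ∀ z : Fin n → ℂ, (∀ α ∈ A, (∑ k, α k * z k) ≠ 0) → ∀ i j,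
      eval z (pderiv i (ψ j)) =
        κ * ∑ α ∈ A, α i * α j * (∑ k, α k * eval z (ψ k)) / (∑ k, α k * z k)) :
    ∀ β : Fin n → ℂ,
      (∑ i, X i * pderiv i (∑ j, C (β j) * ψ j)) = C κ * (∑ j, C (β j) * ψ j) := by
  -- the product of the defining linear forms
  set L : MvPolynomial (Fin n) ℂ := ∏ α ∈ A, ∑ k, C (α k) * X k with hLdef
  have hevalL : ∀ z : Fin n → ℂ, eval z L = ∏ α ∈ A, ∑ k, α k * z k := by
    intro z; simp [hLdef]
  have hL : L ≠ 0 := by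
    rw [hLdef]
    apply Finset.prod_ne_zero_iff.mpr
    intro α hα hcontra
    have hαne : α ≠ 0 := fun h => h0 (h ▸ hα)
    obtain ⟨k, hk⟩ : ∃ k, α k ≠ 0 := by
      by_contra h; push_neg at h; exact hαne (funext h)
    have := congrArg (eval (Pi.single k 1)) hcontra
    simp [Pi.single_apply, mul_ite, Finset.sum_ite_eq'] at this
    exact hk this
  have key : ∀ j, (∑ i, X i * pderiv i (ψ j)) = C κ * ψ j := by
    intro j
    have hfun : ((∑ i, X i * pderiv i (ψ j)) - C κ * ψ j) * L = 0 := by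
      apply MvPolynomial.funext
      intro z
      rw [map_mul, map_zero]
      by_cases hz : ∀ α ∈ A, (∑ k, α k * z k) ≠ 0
      · have h2 : ∑ i, z i * eval z (pderiv i (ψ j))
            = κ * ∑ α ∈ A, α j * ∑ k, α k * eval z (ψ k) := by
          calc ∑ i, z i * eval z (pderiv i (ψ j))
              = ∑ i, z i * (κ * ∑ α ∈ A, α i * α j * (∑ k, α k * eval z (ψ k))
                  / (∑ k, α k * z k)) := by
                exact Finset.sum_congr rfl fun i _ => by rw [heq z hz i j]
            _ = ∑ α ∈ A, ∑ i : Fin n, z i * (κ * (α i * α j * (∑ k, α k * eval z (ψ k))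
                  / (∑ k, α k * z k))) := by
                simp only [Finset.mul_sum]; rw [Finset.sum_comm]
            _ = ∑ α ∈ A, κ * (α j * ∑ k, α k * eval z (ψ k)) := by
                refine Finset.sum_congr rfl fun α hα => ?_
                have hD : (∑ k, α k * z k) ≠ 0 := hz α hα
                have : ∀ i, z i * (κ * (α i * α j * (∑ k, α k * eval z (ψ k))
                    / (∑ k, α k * z k)))
                    = (α i * z i) * (κ * α j * (∑ k, α k * eval z (ψ k))
                    / (∑ k, α k * z k)) := fun i => by ring
                simp only [this]
                rw [← Finset.sum_mul, mul_comm, div_mul_cancel₀ _ hD]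
                ring
            _ = κ * ∑ α ∈ A, α j * ∑ k, α k * eval z (ψ k) := by
                rw [Finset.mul_sum]
        have h3 : ∑ α ∈ A, α j * ∑ k, α k * eval z (ψ k) = eval z (ψ j) := by
          calc ∑ α ∈ A, α j * ∑ k, α k * eval z (ψ k)
              = ∑ k, (∑ α ∈ A, α j * α k) * eval z (ψ k) := by
                simp only [Finset.mul_sum, Finset.sum_mul, mul_assoc]
                rw [Finset.sum_comm]
            _ = eval z (ψ j) := by
                simp [horth j, ite_mul]
        have hq : eval z ((∑ i, X i * pderiv i (ψ j)) - C κ * ψ j) = 0 := by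
          rw [map_sub, map_sum]
          simp only [map_mul, eval_X, eval_C]
          rw [h2, h3]; ring
        rw [hq, zero_mul]
      · push_neg at hz
        obtain ⟨α, hα, hzero⟩ := hz
        have : eval z L = 0 := by
          rw [hevalL]
          exact Finset.prod_eq_zero hα hzero
        rw [this, mul_zero]
    have := (mul_eq_zero.mp hfun).resolve_right hL
    exact sub_eq_zero.mp this
  intro β
  calc ∑ i, X i * pderiv i (∑ j, C (β j) * ψ j)
      = ∑ j, C (β j) * ∑ i, X i * pderiv i (ψ j) := by
        simp only [map_sum, pderiv_C_mul, Finset.mul_sum]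
        rw [Finset.sum_comm]
        exact Finset.sum_congr rfl fun j _ => Finset.sum_congr rfl fun i _ => by ring
    _ = C κ * ∑ j, C (β j) * ψ j := by
        simp only [key, Finset.mul_sum]
        exact Finset.sum_congr rfl fun j _ => by ring
end

section
/- For λ₀,...,λₙ indeterminates and F_κ(x₀,...,xₙ) the coefficient of x^{−κ−1} in the expansion of ∏_{j=0}^{n}(1−x_j/x)^{λ_j} at infinity, for κ = 1,...,n (with n+1 variables x₀,...,xₙ but taking F₀,...,Fₙ where F₀ := p₁^λ = Σλ_i x_i), the Jacobian determinant det(∂F_i/∂x_j)_{i,j=0,...,n} equals ± λ₀λ₁⋯λₙ ∏_{0≤i<j≤n}(x_i − x_j). -/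
open MvPolynomial Finset in
/-- The Jacobian of the potentials `F₀ = p₁^λ`, `F_κ = [x^{−κ−1}] ∏(1−xⱼ/x)^{λⱼ}` (κ=1,…,n)
with respect to `x₀,…,xₙ` equals `± λ₀⋯λₙ ∏_{i<j}(xᵢ−xⱼ)`. -/
theorem stmt_9 (n : ℕ)
    (lam xv : Fin (n + 1) → MvPolynomial (Fin (n + 1) ⊕ Fin (n + 1)) ℚ)
    (hlam : ∀ i, lam i = X (Sum.inl i)) (hx : ∀ i, xv i = X (Sum.inr i))
    (p : ℕ → MvPolynomial (Fin (n + 1) ⊕ Fin (n + 1)) ℚ)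
    (hp : ∀ s, p s = ∑ i, lam i * xv i ^ s)
    (h : ℕ → MvPolynomial (Fin (n + 1) ⊕ Fin (n + 1)) ℚ) (h0 : h 0 = 1)
    (hrec : ∀ m : ℕ, ((m : ℚ) + 1) • h (m + 1) = -∑ s ∈ range (m + 1), p (s + 1) * h (m - s))
    (F : Fin (n + 1) → MvPolynomial (Fin (n + 1) ⊕ Fin (n + 1)) ℚ)
    (hF0 : F 0 = p 1) (hFk : ∀ k : Fin (n + 1), k ≠ 0 → F k = h ((k : ℕ) + 1)) :
    ∃ ε : ℚ, (ε = 1 ∨ ε = -1) ∧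
      (Matrix.of fun k j : Fin (n + 1) => pderiv (Sum.inr j) (F k)).det
        = C ε * (∏ i, lam i) * ∏ i, ∏ j ∈ Ioi i, (xv i - xv j) := by
  classical
  have hdp : ∀ (t : ℕ) (j : Fin (n+1)), pderiv (Sum.inr j) (p (t+1))
      = ((t+1:ℕ) : MvPolynomial (Fin (n+1) ⊕ Fin (n+1)) ℚ) * (lam j * xv j ^ t) := by
    intro t j
    rw [hp, map_sum, Finset.sum_eq_single j]
    · rw [hlam, hx, Derivation.leibniz, Derivation.leibniz_pow]
      simp [pderiv_X, Pi.single_apply, nsmul_eq_mul]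
      ring
    · intro i _ hij
      rw [hlam, hx, Derivation.leibniz, Derivation.leibniz_pow]
      simp [pderiv_X, Pi.single_apply,
        (by simp [hij.symm] : (Sum.inr j : Fin (n+1) ⊕ Fin (n+1)) ≠ Sum.inr i)]
    · simp
  have key : ∀ (m : ℕ) (j : Fin (n+1)), pderiv (Sum.inr j) (h m)
      = -(lam j * ∑ r ∈ range m, xv j ^ r * h (m - 1 - r)) := by
    intro m
    induction m using Nat.strong_induction_on with
    | _ m ih =>
    match m with
    | 0 => intro j; simp [h0]
    | (m+1) =>
      intro j
      show pderiv (Sum.inr j) (h (m+1)) = -(lam j * ∑ r ∈ range (m+1), xv j ^ r * h (m - r))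
      have swap : ∀ (f : ℕ → ℕ → MvPolynomial (Fin (n+1) ⊕ Fin (n+1)) ℚ),
          ∑ s ∈ range (m+1), ∑ r ∈ range (m - s), f s r
            = ∑ r ∈ range (m+1), ∑ s ∈ range (m - r), f s r := by
        intro f
        rw [Finset.sum_sigma', Finset.sum_sigma']
        apply Finset.sum_nbij' (fun x => ⟨x.2, x.1⟩) (fun x => ⟨x.2, x.1⟩) <;> simp <;> omega
      have H := congrArg (pderiv (Sum.inr j)) (hrec m)
      rw [Derivation.map_smul, map_neg, map_sum] at H
      have H2 : ∀ s ∈ range (m+1), pderiv (Sum.inr j) (p (s+1) * h (m - s))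
          = ((s+1:ℕ) : MvPolynomial (Fin (n+1) ⊕ Fin (n+1)) ℚ) * (lam j * xv j ^ s) * h (m-s)
            - p (s+1) * (lam j * ∑ r ∈ range (m-s), xv j ^ r * h (m - s - 1 - r)) := by
        intro s hs
        rw [Derivation.leibniz, hdp, ih (m - s) (by omega) j, smul_eq_mul, smul_eq_mul]
        ring
      rw [Finset.sum_congr rfl H2, Finset.sum_sub_distrib] at H
      -- compute the double sum
      have hB : ∑ s ∈ range (m+1), p (s+1) * (lam j * ∑ r ∈ range (m - s), xv j ^ r * h (m - s - 1 - r))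
          = -(lam j * ∑ r ∈ range (m+1), ((m-r:ℕ) : MvPolynomial (Fin (n+1) ⊕ Fin (n+1)) ℚ) * (xv j ^ r * h (m - r))) := by
        have e0 : ∑ s ∈ range (m+1), p (s+1) * (lam j * ∑ r ∈ range (m - s), xv j ^ r * h (m - s - 1 - r))
            = lam j * ∑ s ∈ range (m+1), ∑ r ∈ range (m-s), p (s+1) * (xv j ^ r * h (m - s - 1 - r)) := by
          rw [Finset.mul_sum]
          refine Finset.sum_congr rfl fun s _ => ?_
          rw [Finset.mul_sum, Finset.mul_sum, Finset.mul_sum]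
          exact Finset.sum_congr rfl fun r _ => by ring
        rw [e0, swap]
        rw [neg_mul_eq_mul_neg, ← Finset.sum_neg_distrib]
        congr 1
        refine Finset.sum_congr rfl fun r hr => ?_
        by_cases hrm : r = m
        · subst hrm; simp
        · have hr' : r < m := by have := mem_range.mp hr; omega
          have e1 : m - r = (m - 1 - r) + 1 := by omega
          have e2 : ∀ s, m - s - 1 - r = (m - 1 - r) - s := by intro s; omega
          have h2 := hrec (m - 1 - r)
          rw [← e1] at h2
          calc ∑ s ∈ range (m - r), p (s+1) * (xv j ^ r * h (m - s - 1 - r))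
              = xv j ^ r * ∑ s ∈ range (m - r), p (s + 1) * h ((m - 1 - r) - s) := by
                rw [Finset.mul_sum]
                exact Finset.sum_congr rfl fun s _ => by rw [e2]; ring
            _ = xv j ^ r * (-(((((m-1-r):ℕ):ℚ)+1) • h (m - r))) := by
                rw [show (∑ s ∈ range (m - r), p (s + 1) * h ((m - 1 - r) - s))
                      = -(((((m-1-r):ℕ):ℚ)+1) • h (m - r)) from by rw [h2, neg_neg]]
            _ = -(((m-r:ℕ) : MvPolynomial (Fin (n+1) ⊕ Fin (n+1)) ℚ) * (xv j ^ r * h (m - r))) := by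
                rw [MvPolynomial.smul_eq_C_mul]
                rw [show (C ((((m-1-r):ℕ):ℚ)+1) : MvPolynomial (Fin (n+1) ⊕ Fin (n+1)) ℚ)
                      = (((m-1-r)+1 : ℕ) : MvPolynomial (Fin (n+1) ⊕ Fin (n+1)) ℚ) by
                  rw [← map_natCast (C : ℚ →+* MvPolynomial (Fin (n+1) ⊕ Fin (n+1)) ℚ), Nat.cast_add, Nat.cast_one]]
                rw [← e1]
                ring
      rw [hB, sub_neg_eq_add] at H
      rw [MvPolynomial.smul_eq_C_mul] at H
      apply mul_left_cancel₀ (show (C ((m:ℚ)+1) : MvPolynomial (Fin (n+1) ⊕ Fin (n+1)) ℚ) ≠ 0 by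
        simp only [ne_eq, MvPolynomial.C_eq_zero]
        positivity)
      rw [H]
      have hL : lam j * ∑ r ∈ range (m+1), ((m-r:ℕ) : MvPolynomial (Fin (n+1) ⊕ Fin (n+1)) ℚ) * (xv j ^ r * h (m - r))
          = ∑ r ∈ range (m+1), lam j * (((m-r:ℕ) : MvPolynomial (Fin (n+1) ⊕ Fin (n+1)) ℚ) * (xv j ^ r * h (m-r))) :=
        Finset.mul_sum _ _ _
      have combine : ∀ r ∈ range (m+1),
          ((r+1:ℕ) : MvPolynomial (Fin (n+1) ⊕ Fin (n+1)) ℚ) * (lam j * xv j ^ r) * h (m-r)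
            + lam j * (((m-r:ℕ) : MvPolynomial (Fin (n+1) ⊕ Fin (n+1)) ℚ) * (xv j ^ r * h (m-r)))
          = C ((m:ℚ)+1) * (lam j * (xv j ^ r * h (m-r))) := by
        intro r hr
        have e3 : (r+1) + (m-r) = m+1 := by have := mem_range.mp hr; omega
        have e4 : (C ((m:ℚ)+1) : MvPolynomial (Fin (n+1) ⊕ Fin (n+1)) ℚ)
            = ((r+1:ℕ) : MvPolynomial (Fin (n+1) ⊕ Fin (n+1)) ℚ) + ((m-r:ℕ) : MvPolynomial (Fin (n+1) ⊕ Fin (n+1)) ℚ) := by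
          rw [← Nat.cast_add, e3, ← map_natCast (C : ℚ →+* MvPolynomial (Fin (n+1) ⊕ Fin (n+1)) ℚ), Nat.cast_add, Nat.cast_one]
        rw [e4]; ring
      rw [hL, ← Finset.sum_add_distrib, Finset.sum_congr rfl combine, mul_neg, Finset.mul_sum, Finset.mul_sum, ← Finset.sum_neg_distrib]
  set L : Matrix (Fin (n+1)) (Fin (n+1)) (MvPolynomial (Fin (n+1) ⊕ Fin (n+1)) ℚ) :=
    Matrix.of fun k r => if k = 0 then (if r = 0 then (1:MvPolynomial (Fin (n+1) ⊕ Fin (n+1)) ℚ) else 0)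
      else (if (r:ℕ) ≤ (k:ℕ) then -h ((k:ℕ) - (r:ℕ)) else 0) with hL
  set V : Matrix (Fin (n+1)) (Fin (n+1)) (MvPolynomial (Fin (n+1) ⊕ Fin (n+1)) ℚ) :=
    Matrix.transpose (Matrix.vandermonde xv) * Matrix.diagonal lam with hV
  have hVapp : ∀ r j, V r j = xv j ^ (r:ℕ) * lam j := by
    intro r j
    rw [hV, Matrix.mul_diagonal, Matrix.transpose_apply, Matrix.vandermonde_apply]
  have hMV : (Matrix.of fun k j : Fin (n + 1) => pderiv (Sum.inr j) (F k)) = L * V := by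
    apply Matrix.ext
    intro k j
    rw [Matrix.mul_apply, Matrix.of_apply]
    by_cases hk : k = 0
    · subst hk
      rw [hF0, hdp 0 j]
      simp [hL, hVapp, ite_mul, Finset.sum_ite_eq']
    · rw [hFk k hk, key]
      have e1 : ∀ r : Fin (n+1), L k r * V r j
          = if (r:ℕ) ≤ (k:ℕ) then -h ((k:ℕ) - (r:ℕ)) * (xv j ^ (r:ℕ) * lam j) else 0 := by
        intro r
        rw [hVapp, hL]
        simp only [Matrix.of_apply, if_neg hk, ite_mul, zero_mul]
      rw [Finset.sum_congr rfl fun r _ => e1 r]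
      rw [Fin.sum_univ_eq_sum_range
        (fun r => if r ≤ (k:ℕ) then -h ((k:ℕ) - r) * (xv j ^ r * lam j) else 0) (n+1)]
      rw [← Finset.sum_filter]
      have e2 : (range (n+1)).filter (fun r => r ≤ (k:ℕ)) = range ((k:ℕ)+1) := by
        ext a; simp [Nat.lt_succ_iff]; intro ha; omega
      rw [e2]
      rw [Finset.mul_sum, ← Finset.sum_neg_distrib]
      exact Finset.sum_congr rfl fun r hr => by
        have e3 : (↑k + 1 - 1 - r : ℕ) = ↑k - r := by omega
        rw [e3]; ring
  have tri : L.BlockTriangular OrderDual.toDual := by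
    intro i j hij
    have hlt : i < j := hij
    rw [hL]; simp only [Matrix.of_apply]
    by_cases hi : i = 0
    · subst hi
      rw [if_pos rfl, if_neg (by rintro rfl; exact lt_irrefl _ hlt)]
    · rw [if_neg hi, if_neg (not_le.mpr (Fin.lt_iff_val_lt_val.mp hlt))]
  have hdetL : L.det = (-1 : MvPolynomial (Fin (n+1) ⊕ Fin (n+1)) ℚ)^n := by
    rw [Matrix.det_of_lowerTriangular L tri]
    have ediag : ∀ i : Fin (n+1), L i i = if i = 0 then 1 else -1 := by
      intro i; rw [hL]; simp only [Matrix.of_apply]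
      by_cases hi : i = 0
      · simp [hi]
      · rw [if_neg hi, if_neg hi, if_pos le_rfl, Nat.sub_self, h0]
    rw [Finset.prod_congr rfl fun i _ => ediag i, Fin.prod_univ_succ]
    simp [Fin.succ_ne_zero, Finset.prod_const]
  have hdetV : V.det = (∏ i, lam i) * ∏ i, ∏ j ∈ Ioi i, (xv j - xv i) := by
    rw [hV, Matrix.det_mul, Matrix.det_transpose, Matrix.det_vandermonde, Matrix.det_diagonal]
    ring
  have hsign : (∏ i : Fin (n+1), ∏ j ∈ Ioi i, (xv j - xv i))
      = (-1 : MvPolynomial (Fin (n+1) ⊕ Fin (n+1)) ℚ)^(∑ i : Fin (n+1), (Ioi i).card)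
          * ∏ i, ∏ j ∈ Ioi i, (xv i - xv j) := by
    rw [← Finset.prod_pow_eq_pow_sum, ← Finset.prod_mul_distrib]
    refine Finset.prod_congr rfl fun i _ => ?_
    rw [← Finset.prod_const (-1 : MvPolynomial (Fin (n+1) ⊕ Fin (n+1)) ℚ), ← Finset.prod_mul_distrib]
    exact Finset.prod_congr rfl fun j _ => by ring
  refine ⟨(-1)^(n + ∑ i : Fin (n+1), (Ioi i).card), ?_, ?_⟩
  · rcases Nat.even_or_odd (n + ∑ i : Fin (n+1), (Ioi i).card) with he | ho
    · left; exact he.neg_one_pow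
    · right; exact ho.neg_one_pow
  · rw [hMV, Matrix.det_mul, hdetL, hdetV, hsign, map_pow, map_neg, map_one]
    ring
end

section
/- Let c₀,...,cₙ be complex numbers with σ = c₀+⋯+cₙ ≠ 0 and all cᵢ ≠ 0, and consider the covectors α_{ij} = √(cᵢcⱼ)(eᵢ−eⱼ) for 0 ≤ i < j ≤ n in the hyperplane {Σxᵢ = 0} ⊂ ℂ^{n+1}. Then the canonical form G(x,y) = Σ_{i<j} cᵢcⱼ(xᵢ−xⱼ)(yᵢ−yⱼ) is nondegenerate on this hyperplane, and the vector α_{ij}^∨ = σ^{−1}√(cᵢcⱼ)(cᵢ^{−1}eᵢ − cⱼ^{−1}eⱼ) satisfies G(α_{ij}^∨, y) = α_{ij}(y) for all y in the hyperplane. -/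
/-!
Writing `⟨x, y⟩_c = Σ cₖxₖyₖ` and `σ = Σ cₖ`, a Lagrange-type identity gives
`G(x, y) = σ⟨x, y⟩_c − ⟨x, 1⟩_c⟨1, y⟩_c`, so `G(x, ·) = Σₖ (σcₖxₖ − ⟨x, 1⟩_c cₖ) yₖ`.
If this vanishes on the hyperplane, its coefficient vector is constant; as the coefficients sum
to `0` they vanish, so `σx` is constant with zero sum and `x = 0`. The vector `α^∨` has
`⟨α^∨, 1⟩_c = 0`, hence `G(α^∨, y) = σ⟨α^∨, y⟩_c = √(cᵢcⱼ)(yᵢ − yⱼ)`.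
-/

open Finset

section

variable {ι R : Type*} [Fintype ι]

theorem eq_of_forall_sum_mul_eq_zero [CommRing R] [DecidableEq ι] {a : ι → R}
    (h : ∀ y : ι → R, ∑ k, y k = 0 → ∑ k, a k * y k = 0) (i j : ι) : a i = a j := by
  have := h (Pi.single i 1 - Pi.single j 1) (by simp)
  simpa [mul_sub, sub_eq_zero, Pi.single_apply] using this

theorem eq_zero_of_forall_eq_of_sum_eq_zero {M : Type*} [AddCommGroup M] [IsAddTorsionFree M]
    {f : ι → M} (hf : ∀ i j, f i = f j) (hsum : ∑ k, f k = 0) : f = 0 := by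
  funext i
  rw [Fintype.sum_congr _ _ fun k => hf k i, sum_const] at hsum
  exact (nsmul_eq_zero_iff.mp hsum).resolve_right (card_ne_zero_of_mem (mem_univ i))

end

section

variable {ι R : Type*} [Fintype ι] [LinearOrder ι] [LocallyFiniteOrderTop ι]
  [LocallyFiniteOrderBot ι]

theorem Finset.sum_sum_eq_sum_add_sum_sum_Ioi {M : Type*} [AddCommMonoid M] (g : ι → ι → M) :
    ∑ i, ∑ j, g i j = ∑ i, g i i + ∑ i, ∑ j ∈ Ioi i, (g i j + g j i) := by
  classical
  rw [sum_sum_Ioi_add_eq_sum_sum_off_diag (fun a b => g b a), ← sum_add_distrib]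
  exact sum_congr rfl fun i _ => Fintype.sum_eq_add_sum_compl i (g i)

def canonicalForm [CommRing R] (c x y : ι → R) : R :=
  ∑ i, ∑ j ∈ Ioi i, c i * c j * (x i - x j) * (y i - y j)

theorem canonicalForm_eq [CommRing R] (c x y : ι → R) :
    canonicalForm c x y
      = (∑ k, c k) * (∑ k, c k * x k * y k) - (∑ k, c k * x k) * (∑ k, c k * y k) := by
  rw [sum_mul_sum, sum_mul_sum,
    sum_sum_eq_sum_add_sum_sum_Ioi (fun i j => c i * (c j * x j * y j)),
    sum_sum_eq_sum_add_sum_sum_Ioi (fun i j => c i * x i * (c j * y j)),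
    add_sub_add_comm, ← sum_sub_distrib, ← sum_sub_distrib]
  have hdiag : ∑ i, (c i * (c i * x i * y i) - c i * x i * (c i * y i)) = 0 :=
    sum_eq_zero fun i _ => by ring
  simp only [← sum_sub_distrib]
  rw [hdiag, zero_add, canonicalForm]
  exact sum_congr rfl fun i _ => sum_congr rfl fun j _ => by ring

theorem canonicalForm_eq_sum_mul [CommRing R] (c x y : ι → R) :
    canonicalForm c x y
      = ∑ k, ((∑ l, c l) * c k * x k - (∑ l, c l * x l) * c k) * y k := by
  simp only [canonicalForm_eq, sub_mul, sum_sub_distrib, mul_sum]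
  congr 1 <;> exact sum_congr rfl fun k _ => by ring

variable [Field R] {c : ι → R}

theorem canonicalForm_nondegenerate [CharZero R] (hc : ∀ i, c i ≠ 0) (hσ : ∑ i, c i ≠ 0)
    {x : ι → R} (hx : ∑ i, x i = 0) (h : ∀ y, ∑ i, y i = 0 → canonicalForm c x y = 0) : x = 0 := by
  classical
  set σ := ∑ i, c i
  set S := ∑ i, c i * x i
  have ha : ∀ k, σ * c k * x k - S * c k = 0 := congr_fun <|
    eq_zero_of_forall_eq_of_sum_eq_zero
      (eq_of_forall_sum_mul_eq_zero fun y hy => canonicalForm_eq_sum_mul c x y ▸ h y hy)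
      (by simp only [sum_sub_distrib, mul_assoc, ← mul_sum]; ring)
  have hσxS (k : ι) : σ * x k = S := by
    have hk : c k * (σ * x k - S) = 0 := by linear_combination ha k
    exact sub_eq_zero.mp ((mul_eq_zero.mp hk).resolve_left (hc k))
  have hσx : ∀ k, σ * x k = 0 := congr_fun <|
    eq_zero_of_forall_eq_of_sum_eq_zero (fun i j => (hσxS i).trans (hσxS j).symm)
      (by rw [← mul_sum, hx, mul_zero])
  funext k
  exact (mul_eq_zero.mp (hσx k)).resolve_left hσ

theorem canonicalForm_coroot [DecidableEq ι] (hσ : ∑ i, c i ≠ 0) {i j : ι} (hi : c i ≠ 0)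
    (hj : c j ≠ 0) (s : R) (y : ι → R) :
    canonicalForm c (fun k => (∑ l, c l)⁻¹ * s * ((c i)⁻¹ * (if k = i then 1 else 0)
        - (c j)⁻¹ * (if k = j then 1 else 0))) y = s * (y i - y j) := by
  rw [canonicalForm_eq]
  simp only [mul_ite, mul_one, mul_zero, mul_sub, sub_mul, ite_mul, zero_mul, sum_sub_distrib,
    sum_ite_eq', mem_univ, ↓reduceIte]
  field_simp
  ring

end

open Finset in
/-- For the `Aₙ(c)` system: the canonical form `G(x,y) = Σ_{i<j} cᵢcⱼ(xᵢ−xⱼ)(yᵢ−yⱼ)` is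
nondegenerate on the hyperplane `Σxᵢ = 0`, and `α^∨ = σ^{−1}√(cᵢcⱼ)(cᵢ^{−1}eᵢ−cⱼ^{−1}eⱼ)`
represents the covector `α = √(cᵢcⱼ)(eᵢ−eⱼ)` with respect to `G`. -/
theorem stmt_11 (n : ℕ) (c : Fin (n + 1) → ℂ) (hc : ∀ i, c i ≠ 0)
    (σ : ℂ) (hσdef : σ = ∑ i, c i) (hσ : σ ≠ 0)
    (G : (Fin (n + 1) → ℂ) → (Fin (n + 1) → ℂ) → ℂ)
    (hG : ∀ x y, G x y = ∑ i, ∑ j ∈ Ioi i, c i * c j * (x i - x j) * (y i - y j)) :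
    (∀ x : Fin (n + 1) → ℂ, (∑ i, x i) = 0 →
      (∀ y : Fin (n + 1) → ℂ, (∑ i, y i) = 0 → G x y = 0) → x = 0) ∧
    (∀ i j : Fin (n + 1), i < j → ∀ s : ℂ, s ^ 2 = c i * c j →
      ∀ y : Fin (n + 1) → ℂ, (∑ k, y k) = 0 →
        G (fun k => σ⁻¹ * s * ((c i)⁻¹ * (if k = i then 1 else 0)
              - (c j)⁻¹ * (if k = j then 1 else 0))) y
          = s * (y i - y j)) := by
  obtain rfl : G = canonicalForm c := funext₂ hG
  subst hσdef
  exact ⟨fun x hx h => canonicalForm_nondegenerate hc hσ hx h,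
    fun i j _ s _ y _ => canonicalForm_coroot hσ (hc i) (hc j) s y⟩
end

section
/- Let λⱼ = κ cⱼ/σ with σ = Σⱼcⱼ ≠ 0 and κ ∈ ℤ. Define ψⱼ = ∂F/∂xⱼ where F is the coefficient of x^{−1} in the formal expansion of ∏_{j=0}^{n}(x−x_j)^{λ_j} at infinity. Then ψ₀ + ψ₁ + ⋯ + ψₙ = 0 identically as polynomials in x₀,...,xₙ. -/
/-!
The operator `D = ∑ⱼ ∂/∂xⱼ` is the infinitesimal generator of the simultaneous translation
`xⱼ ↦ xⱼ + t`. It lowers the weighted power sums, `D p_{s+1} = (s+1) p_s`, and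
`p₀ = ∑ⱼ λⱼ = κ`. Feeding this into Newton's recursion for the coefficients `h_m` of
`exp(-∑ p_s x^{-s}/s)` gives `D h_{m+1} = (m - κ) h_m`, so `D` kills `F = h_{κ+1}`.
-/

open MvPolynomial Finset

theorem Derivation.finset_sum_apply {ι R A M : Type*} [CommSemiring R] [CommSemiring A]
    [AddCommMonoid M] [Algebra R A] [Module A M] [Module R M] (s : Finset ι)
    (D : ι → Derivation R A M) (a : A) : (∑ i ∈ s, D i) a = ∑ i ∈ s, D i a := by
  rw [← Derivation.coeFnAddMonoidHom_apply, map_sum, Finset.sum_apply]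
  rfl

namespace MvPolynomial

variable {σ R : Type*} [Fintype σ] [CommSemiring R]

theorem sum_pderiv_X (i : σ) :
    (∑ j, pderiv j : Derivation R (MvPolynomial σ R) (MvPolynomial σ R)) (X i) = 1 := by
  classical
  rw [Derivation.finset_sum_apply, Finset.sum_eq_single i (fun j _ hji => pderiv_X_of_ne hji.symm)
    (fun hi => (hi (mem_univ i)).elim), pderiv_X_self]

theorem sum_pderiv_weighted_powerSum_succ (a : σ → R) (s : ℕ) :
    (∑ j, pderiv j : Derivation R (MvPolynomial σ R) (MvPolynomial σ R))
        (∑ i, C (a i) * X i ^ (s + 1)) = ((s : R) + 1) • ∑ i, C (a i) * X i ^ s := by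
  rw [map_sum, smul_sum]
  refine sum_congr rfl fun i _ => ?_
  rw [Derivation.leibniz, Derivation.leibniz_pow, sum_pderiv_X, derivation_C]
  simp only [smul_eq_C_mul, nsmul_eq_mul, map_add, map_natCast, map_one, add_tsub_cancel_right,
    Nat.cast_add, Nat.cast_one]
  ring

end MvPolynomial

/-- `hrec` is the recursion satisfied by the coefficients of `exp(-∑_{s≥1} p_s t^s / s)`. -/
theorem Derivation.map_succ_of_newton_recursion {K A : Type*} [Field K] [CharZero K]
    [CommRing A] [Algebra K A] (D : Derivation K A A) (κ : K) {p h : ℕ → A}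
    (hDp : ∀ s, D (p (s + 1)) = ((s : K) + 1) • p s) (hp0 : p 0 = algebraMap K A κ)
    (h0 : h 0 = 1)
    (hrec : ∀ m : ℕ, ((m : K) + 1) • h (m + 1) = -∑ ij ∈ antidiagonal m, p (ij.1 + 1) * h ij.2)
    (m : ℕ) : D (h (m + 1)) = ((m : K) - κ) • h m := by
  induction m using Nat.strong_induction_on with
  | _ m ih =>
  apply smul_right_injective A (Nat.cast_add_one_ne_zero m : (m : K) + 1 ≠ 0)
  dsimp only
  rw [← D.map_smul, hrec m, map_neg, map_sum]
  simp only [D.leibniz, sum_add_distrib]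
  rcases m with _ | k
  · simp [h0, hDp, hp0, Algebra.smul_def]
  · have hterm : ∀ ij ∈ antidiagonal k,
        p (ij.1 + 1) • D (h (ij.2 + 1)) + h ij.2 • D (p (ij.1 + 1 + 1))
          = ((k : K) + 2 - κ) • (p (ij.1 + 1) * h ij.2) := by
      rintro ⟨i, j⟩ hij
      rw [HasAntidiagonal.mem_antidiagonal] at hij
      subst hij
      rw [ih j (by omega), hDp, smul_eq_mul, smul_eq_mul, mul_smul_comm, mul_smul_comm,
        mul_comm (h j)]
      push_cast
      module
    have hbulk : ∑ ij ∈ antidiagonal k,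
        (p (ij.1 + 1) • D (h (ij.2 + 1)) + h ij.2 • D (p (ij.1 + 1 + 1)))
          = ((k : K) + 2 - κ) • -(((k : K) + 1) • h (k + 1)) := by
      rw [sum_congr rfl hterm, ← smul_sum, ← neg_neg (∑ ij ∈ _, _), ← hrec k]
    have hconst : h (k + 1) • D (p (0 + 1)) = κ • h (k + 1) := by
      rw [hDp, hp0, Nat.cast_zero, zero_add, one_smul, smul_eq_mul, ← Algebra.commutes,
        ← Algebra.smul_def]
    rw [Nat.sum_antidiagonal_succ', Nat.sum_antidiagonal_succ, add_add_add_comm,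
      ← sum_add_distrib, hbulk, hconst, h0, D.map_one_eq_zero, smul_zero, zero_add]
    push_cast
    module

open MvPolynomial Finset in
/-- For `λⱼ = κcⱼ/σ`, `σ = Σcⱼ ≠ 0`, `κ ∈ ℤ`, the partial derivatives `ψⱼ = ∂F/∂xⱼ` of the
residue-at-infinity polynomial `F = [x^{−1}] ∏ⱼ(x−xⱼ)^{λⱼ}` (the coefficient `h (κ+1)` of
the series `x^κ exp(−Σ_{s≥1} p_s x^{−s}/s)`, and `0` when `κ+1 < 0`) sum to zero. -/
theorem stmt_12 (n : ℕ) (κ : ℤ) (c : Fin (n + 1) → ℂ)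
    (σ : ℂ) (hσdef : σ = ∑ j, c j) (hσ : σ ≠ 0)
    (lam : Fin (n + 1) → ℂ) (hlam : ∀ j, lam j = κ * c j / σ)
    (p : ℕ → MvPolynomial (Fin (n + 1)) ℂ)
    (hp : ∀ s, p s = ∑ i, C (lam i) * X i ^ s)
    (h : ℕ → MvPolynomial (Fin (n + 1)) ℂ) (h0 : h 0 = 1)
    (hrec : ∀ m : ℕ, ((m : ℂ) + 1) • h (m + 1) = -∑ s ∈ range (m + 1), p (s + 1) * h (m - s))
    (F : MvPolynomial (Fin (n + 1)) ℂ)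
    (hF : F = if 0 ≤ κ + 1 then h (κ + 1).toNat else 0) :
    (∑ j, pderiv j F) = 0 := by
  set D : Derivation ℂ (MvPolynomial (Fin (n + 1)) ℂ) (MvPolynomial (Fin (n + 1)) ℂ) :=
    ∑ j, pderiv j
  have hlam_sum : ∑ i, lam i = κ := by
    simp only [hlam, div_eq_mul_inv, ← sum_mul, ← mul_sum, ← hσdef]
    field_simp
  have hp0 : p 0 = algebraMap ℂ _ (κ : ℂ) := by
    simp [hp, ← map_sum, hlam_sum, algebraMap_eq]
  have hDp (s : ℕ) : D (p (s + 1)) = ((s : ℂ) + 1) • p s := by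
    rw [hp, hp]
    exact sum_pderiv_weighted_powerSum_succ lam s
  have hnewton (m : ℕ) :
      ((m : ℂ) + 1) • h (m + 1) = -∑ ij ∈ antidiagonal m, p (ij.1 + 1) * h ij.2 := by
    rw [hrec, Nat.sum_antidiagonal_eq_sum_range_succ (fun i j => p (i + 1) * h j)]
  have hDh := D.map_succ_of_newton_recursion (κ : ℂ) hDp hp0 h0 hnewton
  rw [← Derivation.finset_sum_apply, hF]
  rcases lt_trichotomy κ (-1) with hκ | rfl | hκ
  · rw [if_neg (by omega), map_zero]
  · simp [h0]
  · lift κ to ℕ using (by omega)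
    rw [if_pos (by omega), show ((κ : ℤ) + 1).toNat = κ + 1 by omega]
    exact (hDh κ).trans (by simp)
end

section
/- The polynomial F(x₀,...,xₙ) defined as the coefficient of x^{−κ−1} in the expansion of ∏_{j=0}^{n}(1−x_j/x)^{λ_j} satisfies the Euler-Poisson-Darboux-type equations ∂ᵢ∂ⱼF = (λᵢ∂ⱼF − λⱼ∂ᵢF)/(xᵢ−xⱼ) for all i ≠ j, identically as polynomials (the right-hand side being polynomial since λᵢ∂ⱼF − λⱼ∂ᵢF vanishes on xᵢ = xⱼ). -/
/-!
Write `H = ∑ hₘ tᵐ`. The recursion says `H' = -P H` with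
`P = ∑ₛ p_{s+1} tˢ = ∑ⱼ λⱼ xⱼ / (1 - xⱼ t)`, i.e. `H = ∏ⱼ (1 - xⱼ t)^{λⱼ}`. Differentiating
coefficientwise in `xᵢ`, both `∂ᵢH` and `-λᵢ t H / (1 - xᵢ t)` have vanishing constant term and
satisfy `G' = -P G`, so they agree; comparing coefficients gives
`∂ᵢ h_{m+1} = xᵢ ∂ᵢ hₘ - λᵢ hₘ`. Applying `∂ⱼ` to this and subtracting the same identity with `i`
and `j` exchanged gives the equation, because `∂ᵢ` and `∂ⱼ` commute.
-/

section

open PowerSeries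

namespace PowerSeries

variable {A : Type*} [CommRing A]

noncomputable def geom (x : A) : A⟦X⟧ := rescale x (mk 1)

theorem one_sub_C_mul_X_mul_geom (x : A) : (1 - C x * X) * geom x = 1 := by
  rw [geom, ← rescale_X, ← map_one (rescale x), ← map_sub, ← map_mul, mul_comm,
    mk_one_mul_one_sub_eq_one, map_one]

theorem coeff_geom_sq (x : A) (n : ℕ) : coeff n (geom x ^ 2) = (n + 1) * x ^ n := by
  rw [geom, ← map_pow, coeff_rescale, mk_one_pow_eq_mk_choose_add, coeff_mk]
  simp [add_comm, mul_comm]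

theorem derivative_X_mul_geom (x : A) : d⁄dX A (X * geom x) = geom x ^ 2 := by
  have hu := one_sub_C_mul_X_mul_geom x
  have h := congrArg (d⁄dX A) hu
  simp only [Derivation.leibniz, map_sub, derivative_one, derivative_C, derivative_X,
    smul_eq_mul] at h
  rw [Derivation.leibniz, derivative_X, smul_eq_mul]
  linear_combination (X * geom x) * h - (geom x + X * d⁄dX A (geom x)) * hu

theorem eq_zero_of_derivative_eq_mul [IsAddTorsionFree A] {f g : A⟦X⟧}
    (hg : d⁄dX A g = f * g) (hg0 : constantCoeff g = 0) : g = 0 := by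
  ext n
  induction n using Nat.strong_induction_on with
  | _ n ih =>
    rcases n with _ | n
    · simpa using hg0
    · have h := congrArg (coeff n) hg
      rw [coeff_derivative, coeff_mul, Finset.sum_eq_zero fun ab hab => ?_] at h
      · rwa [mul_comm, ← Nat.cast_succ, ← nsmul_eq_mul, nsmul_eq_zero_iff_right n.succ_ne_zero] at h
      · rw [ih ab.2 (Finset.Nat.antidiagonal.snd_lt hab), map_zero, mul_zero]

theorem derivative_mk_eq_neg_mul_of_smul_eq {K : Type*} [CommSemiring K] [Algebra K A]
    {p h : ℕ → A} (hrec : ∀ m : ℕ,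
      ((m : K) + 1) • h (m + 1) = -∑ s ∈ Finset.range (m + 1), p (s + 1) * h (m - s)) :
    d⁄dX A (mk h) = -(mk (fun s => p (s + 1)) * mk h) := by
  ext m
  have hm := hrec m
  rw [← Nat.cast_succ, Nat.cast_smul_eq_nsmul, nsmul_eq_mul] at hm
  rw [coeff_derivative, map_neg, coeff_mul,
    Finset.Nat.sum_antidiagonal_eq_sum_range_succ (fun a b => coeff a (mk _) * coeff b (mk h))]
  simpa [mul_comm] using hm

end PowerSeries

namespace Derivation

variable {R A : Type*} [CommSemiring R] [CommRing A] [Algebra R A]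

noncomputable def mapPowerSeries (D : Derivation R A A) (f : A⟦X⟧) : A⟦X⟧ :=
  PowerSeries.mk fun n => D (coeff n f)

variable (D : Derivation R A A)

@[simp]
theorem coeff_mapPowerSeries (f : A⟦X⟧) (n : ℕ) : coeff n (D.mapPowerSeries f) = D (coeff n f) :=
  coeff_mk _ _

theorem mapPowerSeries_neg (f : A⟦X⟧) : D.mapPowerSeries (-f) = -D.mapPowerSeries f := by
  ext n
  simp

theorem mapPowerSeries_mul (f g : A⟦X⟧) :
    D.mapPowerSeries (f * g) = D.mapPowerSeries f * g + f * D.mapPowerSeries g := by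
  ext n
  simp only [coeff_mapPowerSeries, coeff_mul, map_sum, leibniz, smul_eq_mul, map_add,
    ← Finset.sum_add_distrib]
  exact Finset.sum_congr rfl fun _ _ => by ring

theorem mapPowerSeries_derivative (f : A⟦X⟧) :
    D.mapPowerSeries (d⁄dX A f) = d⁄dX A (D.mapPowerSeries f) := by
  ext n
  simp [coeff_derivative, leibniz, mul_comm]

variable [IsAddTorsionFree A]

theorem mapPowerSeries_eq_of_derivative_eq {H P : A⟦X⟧} {x c : A}
    (hH : d⁄dX A H = -(P * H)) (hP : D.mapPowerSeries P = C c * geom x ^ 2)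
    (hH0 : D (constantCoeff H) = 0) :
    D.mapPowerSeries H = -(C c * (X * geom x) * H) := by
  suffices D.mapPowerSeries H + C c * (X * geom x) * H = 0 by linear_combination this
  refine eq_zero_of_derivative_eq_mul (f := -P) ?_ ?_
  · rw [map_add, leibniz, leibniz _ (C c), derivative_X_mul_geom, derivative_C,
      ← mapPowerSeries_derivative, hH, mapPowerSeries_neg, mapPowerSeries_mul, hP]
    simp only [smul_eq_mul]
    ring
  · rw [map_add, ← coeff_zero_eq_constantCoeff_apply, coeff_mapPowerSeries,
      coeff_zero_eq_constantCoeff_apply, hH0]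
    simp

theorem apply_coeff_succ_of_derivative_eq {H P : A⟦X⟧} {x c : A}
    (hH : d⁄dX A H = -(P * H)) (hP : D.mapPowerSeries P = C c * geom x ^ 2)
    (hH0 : D (constantCoeff H) = 0) (m : ℕ) :
    D (coeff (m + 1) H) = x * D (coeff m H) - c * coeff m H := by
  have h := congrArg (coeff (m + 1) <| (1 - C x * X) * ·)
    (D.mapPowerSeries_eq_of_derivative_eq hH hP hH0)
  have hE : (1 - C x * X) * -(C c * (X * geom x) * H) = -(C c * X * H) := by
    linear_combination (-(C c * X * H)) * one_sub_C_mul_X_mul_geom x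
  rw [hE] at h
  simp only [sub_mul, one_mul, mul_assoc, map_sub, map_neg, coeff_C_mul, coeff_succ_X_mul,
    coeff_mapPowerSeries] at h
  linear_combination h

end Derivation

end

theorem Derivation.sub_mul_apply_apply_eq_of_lie_eq_zero {R A : Type*} [CommRing R] [CommRing A]
    [Algebra R A] {D₁ D₂ : Derivation R A A} (hD : ⁅D₁, D₂⁆ = 0)
    {x₁ x₂ c₁ c₂ v w : A} (hx₁ : D₂ x₁ = 0) (hx₂ : D₁ x₂ = 0) (hc₁ : D₂ c₁ = 0)
    (hc₂ : D₁ c₂ = 0) (h₁ : D₁ w = x₁ * D₁ v - c₁ * v) (h₂ : D₂ w = x₂ * D₂ v - c₂ * v) :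
    (x₁ - x₂) * D₁ (D₂ v) = c₁ * D₂ v - c₂ * D₁ v := by
  have hcomm (a : A) : D₁ (D₂ a) = D₂ (D₁ a) := by
    rw [← sub_eq_zero, ← commutator_apply, hD, zero_apply]
  have e₁ := congrArg D₂ h₁
  have e₂ := congrArg D₁ h₂
  simp only [map_sub, leibniz, hx₁, hx₂, hc₁, hc₂, smul_eq_mul, mul_zero, add_zero] at e₁ e₂
  linear_combination e₂ - e₁ - hcomm w + x₁ * hcomm v

namespace MvPolynomial

variable {σ R : Type*} [CommRing R]

theorem lie_pderiv_pderiv (i j : σ) : ⁅pderiv (R := R) i, pderiv (R := R) j⁆ = 0 := by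
  classical
  refine derivation_ext fun k => ?_
  simp [Derivation.commutator_apply, pderiv_X, Pi.single_apply, apply_ite]

theorem mapPowerSeries_pderiv_mk_powerSum [Fintype σ] (lam : σ → R) (i : σ) :
    (pderiv i).mapPowerSeries (PowerSeries.mk fun s => ∑ j, C (lam j) * X j ^ (s + 1)) =
      PowerSeries.C (C (lam i)) * PowerSeries.geom (X i) ^ 2 := by
  classical
  ext s
  simp [PowerSeries.coeff_geom_sq, pderiv_X, Pi.single_apply]

end MvPolynomial

open MvPolynomial Finset in
/-- The residue-at-infinity polynomial `F = [x^{−κ−1}] ∏ⱼ(1−xⱼ/x)^{λⱼ}` satisfies the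
Euler–Poisson–Darboux equations `(xᵢ−xⱼ) ∂ᵢ∂ⱼF = λᵢ∂ⱼF − λⱼ∂ᵢF` for all `i ≠ j`. -/
theorem stmt_13 (K : Type*) [Field K] [CharZero K] (n κ : ℕ) (lam : Fin (n + 1) → K)
    (p : ℕ → MvPolynomial (Fin (n + 1)) K)
    (hp : ∀ s, p s = ∑ i, C (lam i) * X i ^ s)
    (h : ℕ → MvPolynomial (Fin (n + 1)) K) (h0 : h 0 = 1)
    (hrec : ∀ m : ℕ, ((m : K) + 1) • h (m + 1) = -∑ s ∈ range (m + 1), p (s + 1) * h (m - s))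
    (F : MvPolynomial (Fin (n + 1)) K) (hF : F = h (κ + 1)) :
    ∀ i j : Fin (n + 1), i ≠ j →
      (X i - X j) * pderiv i (pderiv j F)
        = C (lam i) * pderiv j F - C (lam j) * pderiv i F := by
  subst hF
  intro i j hij
  have hH := PowerSeries.derivative_mk_eq_neg_mul_of_smul_eq hrec
  simp only [hp] at hH
  have key (k : Fin (n + 1)) (m : ℕ) :
      pderiv k (h (m + 1)) = X k * pderiv k (h m) - C (lam k) * h m := by
    simpa using (pderiv k).apply_coeff_succ_of_derivative_eq hH
      (mapPowerSeries_pderiv_mk_powerSum lam k) (by simp [h0]) m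
  exact Derivation.sub_mul_apply_apply_eq_of_lie_eq_zero (lie_pderiv_pderiv i j)
    (pderiv_X_of_ne hij) (pderiv_X_of_ne hij.symm) pderiv_C pderiv_C (key i (κ + 1)) (key j (κ + 1))
end

section
/- Let A be a finite set of nonzero vectors spanning a complex vector space V with nondegenerate symmetric form, satisfying the ∨-conditions. Then the assignment t_α ↦ α∨⊗α (for α ∈ A) defines a representation of the holonomy Lie algebra of the arrangement: for every 2-dimensional subspace Π of the span of A and every α ∈ A∩Π, the operator α∨⊗α commutes with Σ_{β∈A∩Π} β∨⊗β. -/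
/-!
Let `G = Σ_{γ∈A} γ ⊗ γ : V → V*` be the canonical map, so that `G α^∨ = α`. Write
`T = Σ_{β∈A∩Π} β^∨ ⊗ β`. The ∨-condition says that `α^∨` is an eigenvector of `T` with
eigenvalue `ν`; applying `G` and using the symmetry `β(α^∨) = α(β^∨)` of the canonical form,
`α` is an eigenvector of the transpose of `T` with the same eigenvalue. A rank-one operator
`α^∨ ⊗ α` commutes with any operator having `α^∨` and `α` as right and left eigenvectors for
a common eigenvalue.
-/

open Module

section

variable {K V : Type*} [CommRing K] [AddCommGroup V] [Module K V]

theorem LinearMap.commute_smulRight_of_apply_eq_smul_of_comp_eq_smul {T : End K V}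
    {f : Dual K V} {v : V} {ν : K} (hv : T v = ν • v) (hf : f ∘ₗ T = ν • f) :
    Commute (f.smulRight v) T := by
  refine LinearMap.ext fun x => ?_
  have hfx : f (T x) = ν * f x := by simpa using LinearMap.congr_fun hf x
  simp only [End.mul_apply, LinearMap.smulRight_apply, hfx, map_smul, hv, smul_smul, mul_comm]

namespace Module.Dual

def canonicalMap (A : Finset (Dual K V)) : V →ₗ[K] Dual K V :=
  ∑ γ ∈ A, γ.smulRight γ

theorem canonicalMap_apply (A : Finset (Dual K V)) (x : V) :
    canonicalMap A x = ∑ γ ∈ A, γ x • γ := by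
  simp [canonicalMap]

theorem canonicalMap_apply_comm (A : Finset (Dual K V)) (x y : V) :
    canonicalMap A x y = canonicalMap A y x := by
  simp only [canonicalMap_apply, LinearMap.sum_apply, LinearMap.smul_apply,
    smul_eq_mul, mul_comm]

variable {A S : Finset (Dual K V)} {vee : Dual K V → V}

theorem apply_vee_comm (hvee : ∀ α ∈ A, canonicalMap A (vee α) = α) {β γ : Dual K V}
    (hβ : β ∈ A) (hγ : γ ∈ A) : β (vee γ) = γ (vee β) := by
  calc β (vee γ) = canonicalMap A (vee β) (vee γ) := by rw [hvee β hβ]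
    _ = canonicalMap A (vee γ) (vee β) := canonicalMap_apply_comm A _ _
    _ = γ (vee β) := by rw [hvee γ hγ]

theorem sum_apply_vee_smul_eq (hvee : ∀ α ∈ A, canonicalMap A (vee α) = α) (hS : S ⊆ A)
    {α : Dual K V} (hα : α ∈ A) {ν : K} (hν : ∑ β ∈ S, β (vee α) • vee β = ν • vee α) :
    ∑ β ∈ S, β (vee α) • β = ν • α := by
  have := congrArg (canonicalMap A) hν
  simp only [map_sum, map_smul] at this
  rwa [Finset.sum_congr rfl fun β hβ => by rw [hvee β (hS hβ)], hvee α hα] at this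

theorem commute_smulRight_vee_sum (hvee : ∀ α ∈ A, canonicalMap A (vee α) = α) (hS : S ⊆ A)
    {α : Dual K V} (hα : α ∈ A) {ν : K} (hν : ∑ β ∈ S, β (vee α) • vee β = ν • vee α) :
    Commute (α.smulRight (vee α)) (∑ β ∈ S, β.smulRight (vee β)) := by
  refine LinearMap.commute_smulRight_of_apply_eq_smul_of_comp_eq_smul (ν := ν) ?_ ?_
  · simpa using hν
  · ext x
    have hdual := LinearMap.congr_fun (sum_apply_vee_smul_eq hvee hS hα hν) x
    simp only [LinearMap.sum_apply, LinearMap.smul_apply, smul_eq_mul] at hdual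
    simp only [LinearMap.comp_apply, LinearMap.sum_apply, LinearMap.smulRight_apply,
      map_sum, map_smul, smul_eq_mul, LinearMap.smul_apply, ← hdual]
    exact Finset.sum_congr rfl fun β hβ => by rw [apply_vee_comm hvee hα (hS hβ), mul_comm]

end Module.Dual

end

open Classical in
theorem stmt_19_general (V : Type*) [AddCommGroup V] [Module ℂ V]
    (A : Finset (Module.Dual ℂ V))
    (vee : Module.Dual ℂ V → V)
    (hvee : ∀ α ∈ A, ∑ β ∈ A, β (vee α) • β = α)
    (hvc : ∀ P : Submodule ℂ (Module.Dual ℂ V), Module.finrank ℂ P = 2 →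
      ∀ α ∈ A, α ∈ P → ∃ ν : ℂ,
        ∑ β ∈ A.filter (fun β => β ∈ P), β (vee α) • vee β = ν • vee α) :
    ∀ P : Submodule ℂ (Module.Dual ℂ V), Module.finrank ℂ P = 2 →
      ∀ α ∈ A, α ∈ P →
        Commute (α.smulRight (vee α))
          (∑ β ∈ A.filter (fun β => β ∈ P), β.smulRight (vee β)) := by
  intro P hP α hα hαP
  obtain ⟨ν, hν⟩ := hvc P hP α hα hαP
  have hG : ∀ α ∈ A, Dual.canonicalMap A (vee α) = α := fun α hα => by
    rw [Dual.canonicalMap_apply, hvee α hα]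
  exact Dual.commute_smulRight_vee_sum hG (Finset.filter_subset _ _) hα hν

open Classical in
/-- For a ∨-system `A` (covectors in `V*`, with `α^∨` the `G`-dual vectors of the
canonical form `G = Σ_{α∈A} α⊗α`, and the ∨-conditions expressed as
`Σ_{β∈A∩Π} β(α^∨) β^∨ = ν α^∨`), the assignment `t_α ↦ α^∨⊗α` defines a representation of
the holonomy Lie algebra: `α^∨⊗α` commutes with `Σ_{β∈A∩Π} β^∨⊗β` for every 2-plane `Π`
and every `α ∈ A∩Π`. -/
theorem stmt_19 (V : Type*) [AddCommGroup V] [Module ℂ V] [FiniteDimensional ℂ V]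
    (A : Finset (Module.Dual ℂ V)) (h0 : (0 : Module.Dual ℂ V) ∉ A)
    (hspan : Submodule.span ℂ (A : Set (Module.Dual ℂ V)) = ⊤)
    (vee : Module.Dual ℂ V → V)
    (hvee : ∀ α ∈ A, ∑ β ∈ A, β (vee α) • β = α)
    (hvc : ∀ P : Submodule ℂ (Module.Dual ℂ V), Module.finrank ℂ P = 2 →
      ∀ α ∈ A, α ∈ P → ∃ ν : ℂ,
        ∑ β ∈ A.filter (fun β => β ∈ P), β (vee α) • vee β = ν • vee α) :
    ∀ P : Submodule ℂ (Module.Dual ℂ V), Module.finrank ℂ P = 2 →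
      ∀ α ∈ A, α ∈ P →
        Commute (α.smulRight (vee α))
          (∑ β ∈ A.filter (fun β => β ∈ P), β.smulRight (vee β)) :=
  stmt_19_general V A vee hvee hvc
end
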